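/- With b := J(s_b) and I₂ : [b, ∞) → (0, s_b] the inverse of the restriction of J to (0, s_b], the function I₂ is differentiable on (b, ∞), the improper integral ∫_b^∞ (I₂′(x)/I₂(x) + θ/x) dx converges, and its value is log(c0^θ/(b^θ·s_b)). -/

import Mathlib

open MeasureTheory

/-- The map `J(s; c0, c1) = (c1*s + c0) * ((s+1)/s)^(1/θ)` for real `s`,
using the real power of the positive quantity `(s+1)/s`. -/
noncomputable def Jmap (θ c0 c1 s : ℝ) : ℝ :=
  (c1 * s + c0) * ((s + 1) / s) ^ (1 / θ)

/-- `s_b = (1−θ)/(2θ) + (1/(2θ))·√(4θ·(c0/c1) + (1−θ)²)`. -/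
noncomputable def sB (θ r : ℝ) : ℝ :=
  (1 - θ) / (2 * θ) + 1 / (2 * θ) * Real.sqrt (4 * θ * r + (1 - θ) ^ 2)

/-!
Along `x = J(s)` we have `log s + θ log x = log (s J(s)^θ) = θ log (c1 s + c0) + log (s + 1)`.
Hence the integrand is the derivative of `x ↦ θ log (c1 I₂(x) + c0) + log (I₂(x) + 1)`, which
is continuous at `b`, nonincreasing because `I₂` is, and tends to `θ log c0` because `I₂(x) → 0`.
The integral is therefore `θ log c0 - (log s_b + θ log b)`. Differentiability of `I₂` is the
inverse function theorem: `J' < 0` on `(0, s_b)` because `s_b` is the positive root of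
`θ s² + (θ - 1) s - c0/c1`.
-/
open Set Filter Topology

section RightInverse

variable {f g : ℝ → ℝ} {a m : ℝ}

theorem rightInv_lt_iff (hf : StrictAntiOn f (Ioc a m))
    (hg : ∀ x, f m ≤ x → g x ∈ Ioc a m ∧ f (g x) = x) {x s : ℝ} (hx : f m ≤ x)
    (hs : s ∈ Ioc a m) : g x < s ↔ f s < x := by
  obtain ⟨hgx, hfgx⟩ := hg x hx
  rw [← hf.lt_iff_gt hs hgx, hfgx]

theorem rightInv_apply_self (hf : StrictAntiOn f (Ioc a m))
    (hg : ∀ x, f m ≤ x → g x ∈ Ioc a m ∧ f (g x) = x) : g (f m) = m := by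
  obtain ⟨hgm, hfgm⟩ := hg (f m) le_rfl
  exact hf.injOn hgm (right_mem_Ioc.2 (hgm.1.trans_le hgm.2)) hfgm

theorem left_lt_of_rightInv (hf : StrictAntiOn f (Ioc a m))
    (hg : ∀ x, f m ≤ x → g x ∈ Ioc a m ∧ f (g x) = x) : a < m :=
  rightInv_apply_self hf hg ▸ (hg (f m) le_rfl).1.1

theorem rightInv_strictAntiOn (hf : StrictAntiOn f (Ioc a m))
    (hg : ∀ x, f m ≤ x → g x ∈ Ioc a m ∧ f (g x) = x) : StrictAntiOn g (Ici (f m)) :=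
  fun x hx y hy hxy => (rightInv_lt_iff hf hg hy (hg x hx).1).2 (by rwa [(hg x hx).2])

theorem rightInv_image_Ioi (hf : StrictAntiOn f (Ioc a m))
    (hg : ∀ x, f m ≤ x → g x ∈ Ioc a m ∧ f (g x) = x) : g '' Ioi (f m) = Ioo a m := by
  ext s
  constructor
  · rintro ⟨x, hx, rfl⟩
    exact ⟨(hg x hx.le).1.1,
      (rightInv_lt_iff hf hg hx.le ⟨left_lt_of_rightInv hf hg, le_rfl⟩).2 hx⟩
  · intro hs
    have hm : m ∈ Ioc a m := ⟨hs.1.trans hs.2, le_rfl⟩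
    have hfs : f m < f s := hf (Ioo_subset_Ioc_self hs) hm hs.2
    obtain ⟨hgfs, hfgfs⟩ := hg (f s) hfs.le
    exact ⟨f s, hfs, hf.injOn hgfs (Ioo_subset_Ioc_self hs) hfgfs⟩

theorem rightInv_image_Ici (hf : StrictAntiOn f (Ioc a m))
    (hg : ∀ x, f m ≤ x → g x ∈ Ioc a m ∧ f (g x) = x) : g '' Ici (f m) = Ioc a m := by
  rw [← Ioi_insert, image_insert_eq, rightInv_image_Ioi hf hg, rightInv_apply_self hf hg,
    Ioo_insert_right (left_lt_of_rightInv hf hg)]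

theorem rightInv_continuousAt (hf : StrictAntiOn f (Ioc a m))
    (hg : ∀ x, f m ≤ x → g x ∈ Ioc a m ∧ f (g x) = x) {x : ℝ} (hx : f m < x) :
    ContinuousAt g x := by
  have hmono : MonotoneOn (-g) (Ioi (f m)) := fun y hy z hz hyz =>
    neg_le_neg ((rightInv_strictAntiOn hf hg).antitoneOn (Ioi_subset_Ici_self hy)
      (Ioi_subset_Ici_self hz) hyz)
  have himage : (-g) '' Ioi (f m) = Ioo (-m) (-a) := by
    rw [← image_neg_Ioo, ← rightInv_image_Ioi hf hg, image_image]; rfl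
  have hgx : -g x ∈ Ioo (-m) (-a) := himage ▸ mem_image_of_mem _ hx
  simpa using (continuousAt_of_monotoneOn_of_image_mem_nhds hmono (Ioi_mem_nhds hx)
    (himage ▸ Ioo_mem_nhds hgx.1 hgx.2)).neg

theorem rightInv_continuousWithinAt_Ici (hf : StrictAntiOn f (Ioc a m))
    (hg : ∀ x, f m ≤ x → g x ∈ Ioc a m ∧ f (g x) = x) :
    ContinuousWithinAt g (Ici (f m)) (f m) := by
  have ham := left_lt_of_rightInv hf hg
  have hmono : MonotoneOn (-g) (Ici (f m)) := fun y hy z hz hyz =>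
    neg_le_neg ((rightInv_strictAntiOn hf hg).antitoneOn hy hz hyz)
  have himage : (-g) '' Ici (f m) = Ico (-m) (-a) := by
    rw [← image_neg_Ioc, ← rightInv_image_Ici hf hg, image_image]; rfl
  have hnhds : (-g) '' Ici (f m) ∈ 𝓝[≥] ((-g) (f m)) := by
    rw [himage, Pi.neg_apply, rightInv_apply_self hf hg]
    exact Ico_mem_nhdsGE (neg_lt_neg ham)
  simpa using (continuousWithinAt_right_of_monotoneOn_of_image_mem_nhdsWithin hmono
    self_mem_nhdsWithin hnhds).neg

theorem rightInv_tendsto_atTop (hf : StrictAntiOn f (Ioc a m))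
    (hg : ∀ x, f m ≤ x → g x ∈ Ioc a m ∧ f (g x) = x) : Tendsto g atTop (𝓝 a) := by
  have ham := left_lt_of_rightInv hf hg
  refine tendsto_order.2 ⟨fun a' ha' => ?_, fun a' ha' => ?_⟩
  · filter_upwards [eventually_ge_atTop (f m)] with x hx
    exact ha'.trans (hg x hx).1.1
  · have hs : min a' m ∈ Ioc a m := ⟨lt_min ha' ham, min_le_right _ _⟩
    filter_upwards [eventually_gt_atTop (max (f m) (f (min a' m)))] with x hx
    exact ((rightInv_lt_iff hf hg (le_max_left _ _ |>.trans hx.le) hs).2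
      ((le_max_right _ _).trans_lt hx)).trans_le (min_le_left _ _)

theorem eventually_rightInv_apply (hg : ∀ x, f m ≤ x → g x ∈ Ioc a m ∧ f (g x) = x) {x : ℝ}
    (hx : f m < x) : ∀ᶠ y in 𝓝 x, f (g y) = y :=
  eventually_of_mem (Ioi_mem_nhds hx) fun y hy => (hg y (le_of_lt hy)).2

theorem rightInv_hasDerivAt (hf : StrictAntiOn f (Ioc a m))
    (hg : ∀ x, f m ≤ x → g x ∈ Ioc a m ∧ f (g x) = x) {x f' : ℝ} (hx : f m < x)
    (hf' : HasDerivAt f f' (g x)) (hf'0 : f' ≠ 0) : HasDerivAt g f'⁻¹ x :=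
  hf'.of_local_left_inverse (rightInv_continuousAt hf hg hx) hf'0
    (eventually_rightInv_apply hg hx)

end RightInverse

theorem sB_pos {θ r : ℝ} (hθ : 0 < θ) (hr : 0 < r) : 0 < sB θ r := by
  have hD : θ - 1 < √(4 * θ * r + (1 - θ) ^ 2) := Real.lt_sqrt_of_sq_lt (by nlinarith)
  have h2θ : 2 * θ * sB θ r = 1 - θ + √(4 * θ * r + (1 - θ) ^ 2) := by
    rw [sB]; field_simp
  nlinarith

theorem quadratic_neg_of_lt_sB {θ r s : ℝ} (hθ : 0 < θ) (hr : 0 < r) (hs : 0 ≤ s)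
    (hsb : s < sB θ r) : θ * s ^ 2 + (θ - 1) * s - r < 0 := by
  have h2θ : 2 * θ * sB θ r = 1 - θ + √(4 * θ * r + (1 - θ) ^ 2) := by rw [sB]; field_simp
  set D := √(4 * θ * r + (1 - θ) ^ 2)
  have hD2 : D ^ 2 = 4 * θ * r + (1 - θ) ^ 2 := Real.sq_sqrt (by nlinarith)
  have hD : 1 - θ < D := Real.lt_sqrt_of_sq_lt (by nlinarith)
  have hlo : -D < 2 * θ * s - (1 - θ) := by nlinarith
  have hhi : 2 * θ * s - (1 - θ) < D := by nlinarith
  -- `4θ · (θ s² + (θ - 1) s - r) = (2θ s - (1 - θ))² - D²`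
  nlinarith [mul_pos (sub_pos.2 hhi) (neg_lt_iff_pos_add.1 hlo)]

theorem hasDerivAt_Jmap {θ c0 c1 s : ℝ} (hs : 0 < s) :
    HasDerivAt (Jmap θ c0 c1)
      (((s + 1) / s) ^ (1 / θ) * (c1 - (c1 * s + c0) / (θ * s * (s + 1)))) s := by
  have hu : 0 < (s + 1) / s := by positivity
  have hq : HasDerivAt (fun t => (t + 1) / t) (-(1 / s ^ 2)) s := by
    refine (((hasDerivAt_id' s).add_const 1).div (hasDerivAt_id' s) hs.ne').congr_deriv ?_
    field_simp
    ring
  have hJ : HasDerivAt (fun t => (c1 * t + c0) * ((t + 1) / t) ^ (1 / θ)) _ s :=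
    (((hasDerivAt_id' s).const_mul c1).add_const c0).mul
      (hq.rpow_const (p := 1 / θ) (Or.inl hu.ne'))
  refine hJ.congr_deriv ?_
  rw [Real.rpow_sub hu, Real.rpow_one]
  field_simp
  ring

theorem Jmap_pos {θ c0 c1 s : ℝ} (hc0 : 0 < c0) (hc1 : 0 ≤ c1) (hs : 0 < s) :
    0 < Jmap θ c0 c1 s := by
  unfold Jmap; positivity

theorem deriv_Jmap_neg {θ c0 c1 s : ℝ} (hθ : 0 < θ) (hc0 : 0 < c0) (hc1 : 0 < c1) (hs : 0 < s)
    (hsb : s < sB θ (c0 / c1)) : deriv (Jmap θ c0 c1) s < 0 := by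
  have hq := quadratic_neg_of_lt_sB hθ (div_pos hc0 hc1) hs.le hsb
  rw [(hasDerivAt_Jmap hs).deriv]
  refine mul_neg_of_pos_of_neg (by positivity) (sub_neg.2 ?_)
  rw [lt_div_iff₀ (by positivity)]
  have : c1 * (c0 / c1) = c0 := by field_simp
  nlinarith

theorem Jmap_strictAntiOn {θ c0 c1 : ℝ} (hθ : 0 < θ) (hc0 : 0 < c0) (hc1 : 0 < c1) :
    StrictAntiOn (Jmap θ c0 c1) (Ioc 0 (sB θ (c0 / c1))) :=
  strictAntiOn_of_deriv_neg (convex_Ioc _ _)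
    (fun _ hs => (hasDerivAt_Jmap hs.1).continuousAt.continuousWithinAt)
    (fun _ hs => by rw [interior_Ioc] at hs; exact deriv_Jmap_neg hθ hc0 hc1 hs.1 hs.2)

-- `logSJ θ c0 c1 s = log (s · J(s)^θ)`, written so that it is smooth up to `s = 0`.
noncomputable def logSJ (θ c0 c1 s : ℝ) : ℝ :=
  θ * Real.log (c1 * s + c0) + Real.log (s + 1)

theorem log_add_mul_log_Jmap {θ c0 c1 s : ℝ} (hθ : θ ≠ 0) (hs : 0 < s)
    (hc : 0 < c1 * s + c0) : Real.log s + θ * Real.log (Jmap θ c0 c1 s) = logSJ θ c0 c1 s := by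
  have hu : 0 < (s + 1) / s := by positivity
  rw [Jmap, logSJ, Real.log_mul hc.ne' (Real.rpow_pos_of_pos hu _).ne', Real.log_rpow hu,
    Real.log_div (by positivity) hs.ne']
  field_simp
  ring

theorem hasDerivAt_logSJ {θ c0 c1 s : ℝ} (hc : c1 * s + c0 ≠ 0) (hs : s + 1 ≠ 0) :
    HasDerivAt (logSJ θ c0 c1) (θ * (c1 / (c1 * s + c0)) + 1 / (s + 1)) s := by
  have h : HasDerivAt (fun t => θ * Real.log (c1 * t + c0) + Real.log (t + 1)) _ s :=
    ((((hasDerivAt_id' s).const_mul c1).add_const c0).log hc).const_mul θ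
      |>.add (((hasDerivAt_id' s).add_const 1).log hs)
  exact h.congr_deriv (by rw [mul_one])

theorem hasDerivAt_logSJ_comp {θ c0 c1 x d : ℝ} {I : ℝ → ℝ} (hθ : θ ≠ 0) (hc0 : 0 < c0)
    (hc1 : 0 ≤ c1) (hI : HasDerivAt I d x) (hIx : 0 < I x)
    (hJI : ∀ᶠ y in 𝓝 x, Jmap θ c0 c1 (I y) = y) :
    HasDerivAt (logSJ θ c0 c1 ∘ I) (d / I x + θ / x) x := by
  have hx : 0 < x := hJI.self_of_nhds ▸ Jmap_pos hc0 hc1 hIx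
  have heq : (fun y => Real.log (I y) + θ * Real.log y) =ᶠ[𝓝 x] logSJ θ c0 c1 ∘ I := by
    filter_upwards [hI.continuousAt.eventually (Ioi_mem_nhds hIx), hJI] with y hy hJy
    rw [Function.comp_apply, ← log_add_mul_log_Jmap hθ hy (by positivity), hJy]
  exact (((hI.log hIx.ne').add ((Real.hasDerivAt_log hx.ne').const_mul θ)).congr_of_eventuallyEq
    heq.symm).congr_deriv (by rw [div_eq_mul_inv θ])

theorem div_add_div_nonpos_of_deriv_nonpos {θ c0 c1 x d : ℝ} {I : ℝ → ℝ} (hθ : 0 < θ)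
    (hc0 : 0 < c0) (hc1 : 0 ≤ c1) (hI : HasDerivAt I d x) (hd : d ≤ 0) (hIx : 0 < I x)
    (hJI : ∀ᶠ y in 𝓝 x, Jmap θ c0 c1 (I y) = y) : d / I x + θ / x ≤ 0 := by
  have hchain := (hasDerivAt_logSJ (θ := θ) (c0 := c0) (c1 := c1) (by positivity)
    (by positivity)).comp x hI
  rw [(hasDerivAt_logSJ_comp hθ.ne' hc0 hc1 hI hIx hJI).unique hchain]
  exact mul_nonpos_of_nonneg_of_nonpos (by positivity) hd

/-- With `b := J(s_b)` and `I₂ : [b, ∞) → (0, s_b]` the inverse of the restriction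
of `J` to `(0, s_b]`: `I₂` is differentiable on `(b, ∞)`, the improper integral
`∫_b^∞ (I₂′(x)/I₂(x) + θ/x) dx` converges, and equals `log(c0^θ/(b^θ·s_b))`. -/
theorem stmt9 (θ c0 c1 : ℝ) (hθ : 0 < θ) (hc1 : 0 < c1) (hc01 : c1 < c0)
    (I2 : ℝ → ℝ)
    (hI2 : ∀ x, Jmap θ c0 c1 (sB θ (c0 / c1)) ≤ x →
      (0 < I2 x ∧ I2 x ≤ sB θ (c0 / c1)) ∧ Jmap θ c0 c1 (I2 x) = x) :
    (∀ x, Jmap θ c0 c1 (sB θ (c0 / c1)) < x → DifferentiableAt ℝ I2 x) ∧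
    IntegrableOn (fun x => deriv I2 x / I2 x + θ / x)
      (Set.Ioi (Jmap θ c0 c1 (sB θ (c0 / c1)))) ∧
    (∫ x in Set.Ioi (Jmap θ c0 c1 (sB θ (c0 / c1))), (deriv I2 x / I2 x + θ / x))
      = Real.log (c0 ^ θ / ((Jmap θ c0 c1 (sB θ (c0 / c1))) ^ θ * sB θ (c0 / c1))) := by
  have hc0 : 0 < c0 := hc1.trans hc01
  have hJ := Jmap_strictAntiOn hθ hc0 hc1
  set sb := sB θ (c0 / c1)
  set b := Jmap θ c0 c1 sb
  have hsb : 0 < sb := sB_pos hθ (div_pos hc0 hc1)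
  have hb : 0 < b := Jmap_pos hc0 hc1.le hsb
  have hI2b : I2 b = sb := rightInv_apply_self hJ hI2
  have hI2x : ∀ x ∈ Ioi b, 0 < I2 x ∧ I2 x < sb := fun x hx =>
    (rightInv_image_Ioi hJ hI2).subset (mem_image_of_mem I2 hx)
  have hderiv : ∀ x ∈ Ioi b, HasDerivAt I2 (deriv I2 x) x ∧ deriv I2 x < 0 := by
    intro x hx
    have hJ' := deriv_Jmap_neg hθ hc0 hc1 (hI2x x hx).1 (hI2x x hx).2
    have h := rightInv_hasDerivAt hJ hI2 hx
      (hasDerivAt_Jmap (hI2x x hx).1).differentiableAt.hasDerivAt hJ'.ne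
    exact ⟨h.differentiableAt.hasDerivAt, h.deriv ▸ inv_lt_zero.2 hJ'⟩
  have hG : ∀ x ∈ Ioi b,
      HasDerivAt (logSJ θ c0 c1 ∘ I2) (deriv I2 x / I2 x + θ / x) x := fun x hx =>
    hasDerivAt_logSJ_comp hθ.ne' hc0 hc1.le (hderiv x hx).1 (hI2x x hx).1
      (eventually_rightInv_apply hI2 hx)
  have hG' : ∀ x ∈ Ioi b, deriv I2 x / I2 x + θ / x ≤ 0 := fun x hx =>
    div_add_div_nonpos_of_deriv_nonpos hθ hc0 hc1.le (hderiv x hx).1 (hderiv x hx).2.le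
      (hI2x x hx).1 (eventually_rightInv_apply hI2 hx)
  have hGb : ContinuousWithinAt (logSJ θ c0 c1 ∘ I2) (Ici b) b :=
    (hasDerivAt_logSJ (by rw [hI2b]; positivity) (by rw [hI2b]; positivity)).continuousAt
      |>.comp_continuousWithinAt (rightInv_continuousWithinAt_Ici (f := Jmap θ c0 c1) hJ hI2)
  have hlim : Tendsto (logSJ θ c0 c1 ∘ I2) atTop (𝓝 (θ * Real.log c0)) := by
    have h := (hasDerivAt_logSJ (θ := θ) (c1 := c1) (s := 0) (by simpa using hc0.ne')
      (by norm_num)).continuousAt.tendsto.comp (rightInv_tendsto_atTop hJ hI2)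
    simpa [logSJ] using h
  refine ⟨fun x hx => (hderiv x hx).1.differentiableAt,
    integrableOn_Ioi_deriv_of_nonpos hGb hG hG' hlim, ?_⟩
  rw [integral_Ioi_of_hasDerivAt_of_nonpos hGb hG hG' hlim, Function.comp_apply, hI2b,
    ← log_add_mul_log_Jmap hθ.ne' hsb (by positivity),
    Real.log_div (by positivity) (by positivity), Real.log_mul (by positivity) hsb.ne',
    Real.log_rpow hc0, Real.log_rpow hb]
  ring
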